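/- (Maximal connectedness, three-qudit instance) Let φ be the one-dimensional 3-qudit cluster state and, for s ∈ ℤ/dℤ, let |x(s)⟩ = d^{−1/2} Σ_k ω^{sk} e_k. Then projecting the middle qudit onto |x(s)⟩ yields a maximally entangled state of qudits 1 and 3: the partial inner product ⟨x(s)|₂ φ equals d^{−1} Σ_{k∈ℤ/dℤ} e_k ⊗ e_{s−k}, a nonzero vector whose normalization is maximally entangled (its reduced density matrix on either factor is I/d). -/

import Mathlib

open Matrix

/-- ω = exp(2πi/d), a primitive d-th root of unity. -/
noncomputable def qomega (d : ℕ) : ℂ := Complex.exp (2 * Real.pi * Complex.I / d)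

/-- The one-dimensional `N`-qudit cluster state,
`φ(k₁,…,k_N) = d^{−N/2} ω^{∑_{a=1}^{N−1} k_a k_{a+1}}`. -/
noncomputable def clusterChain (d N : ℕ) [NeZero d] : (Fin N → ZMod d) → ℂ :=
  fun k => (Real.sqrt ((d : ℝ) ^ N))⁻¹ *
    qomega d ^ (∑ i : Fin (N - 1),
      (k ⟨i.val, Nat.lt_of_lt_of_le i.isLt (Nat.sub_le N 1)⟩).val *
      (k ⟨i.val + 1, Nat.add_lt_of_lt_sub i.isLt⟩).val)

/-- `|x(s)⟩ = d^{-1/2} ∑_k ω^{sk} e_k`. -/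
noncomputable def xvec (d : ℕ) [NeZero d] (s : ZMod d) : ZMod d → ℂ :=
  fun k => (Real.sqrt d)⁻¹ * qomega d ^ (s.val * k.val)

/-- The partial inner product `⟨x(s)|₂ φ` of the middle qudit of the 3-qudit cluster
state: a vector on qudits 1 and 3. -/
noncomputable def projectedMiddle (d : ℕ) [NeZero d] (s : ZMod d) :
    (ZMod d × ZMod d) → ℂ :=
  fun p => ∑ k₂ : ZMod d,
    star (xvec d s k₂) * clusterChain d 3 ![p.1, k₂, p.2]

/-!
Conjugating the amplitude of `|x(s)⟩` turns the projected amplitude at `(a, b)` into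
`d⁻² ∑ₖ ω^((a + b - s) k)`, a character sum over `ℤ/dℤ` that is `d` when `b = s - a` and `0`
otherwise. So `⟨x(s)|₂ φ` is `d⁻¹` times the indicator of the graph of the bijection
`a ↦ s - a`, and a vector of constant amplitude `c` on the graph of a bijection has both
reduced density matrices equal to `|c|² • 1`, which is `I / d` after normalization.
-/

theorem IsPrimitiveRoot.sum_pow_mul_val {R : Type*} [CommRing R] [IsDomain R] {ζ : R} {d : ℕ}
    [NeZero d] (hζ : IsPrimitiveRoot ζ d) (m : ℕ) :
    ∑ k : ZMod d, ζ ^ (m * k.val) = if (m : ZMod d) = 0 then (d : R) else 0 := by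
  have hsum : ∑ k : ZMod d, ζ ^ (m * k.val) = ∑ i ∈ Finset.range d, (ζ ^ m) ^ i := by
    obtain ⟨n, rfl⟩ := Nat.exists_eq_succ_of_ne_zero (NeZero.ne d)
    simp_rw [pow_mul]
    exact Fin.sum_univ_eq_sum_range (fun i => (ζ ^ m) ^ i) _
  have hunit : (m : ZMod d) = 0 ↔ ζ ^ m = 1 := by
    rw [ZMod.natCast_eq_zero_iff, hζ.pow_eq_one_iff_dvd]
  rw [hsum]
  split_ifs with h
  · simp [hunit.mp h]
  · rw [hunit] at h
    have hroot : (ζ ^ m) ^ d = 1 := by rw [← pow_mul, mul_comm, pow_mul, hζ.pow_eq_one, one_pow]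
    refine (mul_eq_zero.mp ?_).resolve_right (sub_ne_zero.mpr h)
    rw [geom_sum_mul, hroot, sub_self]

theorem Complex.star_eq_pow_pred_of_pow_eq_one {ζ : ℂ} {d : ℕ} (hζ : ζ ^ d = 1) (hd : d ≠ 0) :
    star ζ = ζ ^ (d - 1) := by
  rw [Complex.star_def, ← Complex.inv_eq_conj (Complex.norm_eq_one_of_pow_eq_one hζ hd)]
  refine (eq_inv_of_mul_eq_one_left ?_).symm
  rw [pow_sub_one_mul hd, hζ]

theorem Complex.normSq_inv_sqrt_mul_normSq_mul {c : ℂ} (hc : c ≠ 0) (x : ℝ) (hx : 0 ≤ x) :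
    Complex.normSq ((Real.sqrt (x * Complex.normSq c) : ℂ)⁻¹ * c) = x⁻¹ := by
  rw [Complex.normSq_mul, Complex.normSq_inv, Complex.normSq_ofReal,
    Real.mul_self_sqrt (mul_nonneg hx (Complex.normSq_nonneg c)), mul_inv, mul_assoc,
    inv_mul_cancel₀ (Complex.normSq_pos.mpr hc).ne', mul_one]

section MaximallyEntangled

variable {ι κ : Type*}

noncomputable def normalizeState [Fintype ι] [Fintype κ] (u : ι × κ → ℂ) : ι × κ → ℂ :=
  (Real.sqrt (∑ p, Complex.normSq (u p)) : ℂ)⁻¹ • u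

def reducedLeft [Fintype κ] (u : ι × κ → ℂ) : Matrix ι ι ℂ :=
  Matrix.of fun a b => ∑ c, u (a, c) * star (u (b, c))

def reducedRight [Fintype ι] (u : ι × κ → ℂ) : Matrix κ κ ℂ :=
  Matrix.of fun a b => ∑ c, u (c, a) * star (u (c, b))

theorem reducedRight_eq_reducedLeft_comp_swap [Fintype ι] (u : ι × κ → ℂ) :
    reducedRight u = reducedLeft (u ∘ Prod.swap) :=
  rfl

variable [DecidableEq κ] (σ : ι ≃ κ)

def graphVector (c : ℂ) : ι × κ → ℂ := fun p => if p.2 = σ p.1 then c else 0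

theorem graphVector_comp_swap [DecidableEq ι] (c : ℂ) :
    graphVector σ c ∘ Prod.swap = graphVector σ.symm c := by
  funext p
  simp [graphVector, Equiv.eq_symm_apply, eq_comm]

theorem graphVector_ne_zero [Nonempty ι] {c : ℂ} (hc : c ≠ 0) : graphVector σ c ≠ 0 := by
  obtain ⟨a⟩ := ‹Nonempty ι›
  intro h
  exact hc (by simpa [graphVector] using congr_fun h (a, σ a))

theorem smul_graphVector (r c : ℂ) : r • graphVector σ c = graphVector σ (r * c) := by
  funext p
  simp [graphVector]

theorem sum_normSq_graphVector [Fintype ι] [Fintype κ] (c : ℂ) :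
    ∑ p, Complex.normSq (graphVector σ c p) = Fintype.card ι * Complex.normSq c := by
  simp [graphVector, Fintype.sum_prod_type, apply_ite Complex.normSq]

theorem normalizeState_graphVector [Fintype ι] [Fintype κ] (c : ℂ) :
    normalizeState (graphVector σ c)
      = graphVector σ ((Real.sqrt (Fintype.card ι * Complex.normSq c) : ℂ)⁻¹ * c) := by
  rw [normalizeState, sum_normSq_graphVector, smul_graphVector]

theorem reducedLeft_graphVector [Fintype κ] [DecidableEq ι] (c : ℂ) :
    reducedLeft (graphVector σ c) = (Complex.normSq c : ℂ) • 1 := by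
  ext a b
  simp only [reducedLeft, graphVector, Matrix.of_apply, ite_mul, zero_mul, Finset.sum_ite_eq',
    Finset.mem_univ, if_true, σ.injective.eq_iff, Matrix.smul_apply, Matrix.one_apply]
  split_ifs <;> simp [Complex.mul_conj]

theorem reducedRight_graphVector [Fintype ι] [DecidableEq ι] (c : ℂ) :
    reducedRight (graphVector σ c) = (Complex.normSq c : ℂ) • 1 := by
  rw [reducedRight_eq_reducedLeft_comp_swap, graphVector_comp_swap, reducedLeft_graphVector]

theorem reducedLeft_normalizeState_graphVector [Fintype ι] [Fintype κ] [DecidableEq ι] {c : ℂ}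
    (hc : c ≠ 0) :
    reducedLeft (normalizeState (graphVector σ c)) = (Fintype.card ι : ℂ)⁻¹ • 1 := by
  rw [normalizeState_graphVector, reducedLeft_graphVector,
    Complex.normSq_inv_sqrt_mul_normSq_mul hc _ (Nat.cast_nonneg _)]
  push_cast
  rfl

theorem reducedRight_normalizeState_graphVector [Fintype ι] [Fintype κ] [DecidableEq ι] {c : ℂ}
    (hc : c ≠ 0) :
    reducedRight (normalizeState (graphVector σ c)) = (Fintype.card ι : ℂ)⁻¹ • 1 := by
  rw [normalizeState_graphVector, reducedRight_graphVector,
    Complex.normSq_inv_sqrt_mul_normSq_mul hc _ (Nat.cast_nonneg _)]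
  push_cast
  rfl

end MaximallyEntangled

section ThreeQuditCluster

variable (d : ℕ) [NeZero d]

theorem qomega_isPrimitiveRoot : IsPrimitiveRoot (qomega d) d :=
  Complex.isPrimitiveRoot_exp d (NeZero.ne d)

theorem star_qomega_pow (n : ℕ) :
    star (qomega d ^ n) = qomega d ^ ((d - 1) * n) := by
  rw [star_pow, Complex.star_eq_pow_pred_of_pow_eq_one (qomega_isPrimitiveRoot d).pow_eq_one
    (NeZero.ne d), ← pow_mul]

theorem clusterChain_three (a k b : ZMod d) :
    clusterChain d 3 ![a, k, b]
      = (Real.sqrt ((d : ℝ) ^ 3) : ℂ)⁻¹ * qomega d ^ (a.val * k.val + k.val * b.val) := by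
  simp [clusterChain, Fin.sum_univ_two]

theorem star_xvec (s k : ZMod d) :
    star (xvec d s k) = (Real.sqrt d : ℂ)⁻¹ * qomega d ^ ((d - 1) * (s.val * k.val)) := by
  rw [xvec, star_mul', star_qomega_pow, Complex.star_def, Complex.conj_ofReal, Complex.ofReal_inv]

theorem inv_sqrt_mul_inv_sqrt_pow_three (n : ℕ) :
    (Real.sqrt n : ℂ)⁻¹ * (Real.sqrt ((n : ℝ) ^ 3) : ℂ)⁻¹ = ((n : ℂ) ^ 2)⁻¹ := by
  rw [← mul_inv, ← Complex.ofReal_mul, ← Real.sqrt_mul n.cast_nonneg,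
    show (n : ℝ) * n ^ 3 = (n ^ 2) ^ 2 by ring, Real.sqrt_sq (by positivity)]
  push_cast
  rfl

theorem projectedMiddle_apply (s a b : ZMod d) :
    projectedMiddle d s (a, b) = ((d : ℂ) ^ 2)⁻¹ *
      ∑ k : ZMod d, qomega d ^ (((d - 1) * s.val + (a.val + b.val)) * k.val) := by
  rw [projectedMiddle, Finset.mul_sum]
  refine Finset.sum_congr rfl fun k _ => ?_
  rw [star_xvec, clusterChain_three, mul_mul_mul_comm, inv_sqrt_mul_inv_sqrt_pow_three, ← pow_add]
  congr 2
  ring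

theorem projectedMiddle_eq (s : ZMod d) :
    projectedMiddle d s = graphVector (Equiv.subLeft s) (d : ℂ)⁻¹ := by
  funext ⟨a, b⟩
  have hexponent : (((d - 1) * s.val + (a.val + b.val) : ℕ) : ZMod d) = b - (s - a) := by
    push_cast [Nat.cast_sub NeZero.one_le, ZMod.natCast_zmod_val, ZMod.natCast_self]
    ring
  rw [projectedMiddle_apply, (qomega_isPrimitiveRoot d).sum_pow_mul_val, hexponent, graphVector]
  simp only [sub_eq_zero, Equiv.subLeft_apply]
  split_ifs
  · field_simp
  · rw [mul_zero]

end ThreeQuditCluster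

theorem three_qudit_maximal_connectedness_general (d : ℕ) [NeZero d]
    (s : ZMod d) :
    projectedMiddle d s
      = (fun p : ZMod d × ZMod d => if p.2 = s - p.1 then ((d : ℂ))⁻¹ else 0) ∧
    projectedMiddle d s ≠ 0 ∧
    (letI u : (ZMod d × ZMod d) → ℂ :=
      (Real.sqrt (∑ p : ZMod d × ZMod d, Complex.normSq (projectedMiddle d s p)) : ℂ)⁻¹
        • projectedMiddle d s
     (Matrix.of fun a b : ZMod d => ∑ c : ZMod d, u (a, c) * star (u (b, c)))
        = ((d : ℂ))⁻¹ • (1 : Matrix (ZMod d) (ZMod d) ℂ) ∧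
     (Matrix.of fun a b : ZMod d => ∑ c : ZMod d, u (c, a) * star (u (c, b)))
        = ((d : ℂ))⁻¹ • (1 : Matrix (ZMod d) (ZMod d) ℂ)) := by
  have hc : ((d : ℂ))⁻¹ ≠ 0 := inv_ne_zero (Nat.cast_ne_zero.mpr (NeZero.ne d))
  refine ⟨projectedMiddle_eq d s, ?_, ?_⟩ <;> rw [projectedMiddle_eq]
  · exact graphVector_ne_zero _ hc
  · have hleft := reducedLeft_normalizeState_graphVector (Equiv.subLeft s) hc
    have hright := reducedRight_normalizeState_graphVector (Equiv.subLeft s) hc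
    rw [ZMod.card] at hleft hright
    exact ⟨hleft, hright⟩

/-- maximal connectedness, three-qudit instance: projecting the middle
qudit of the 3-qudit cluster state onto `|x(s)⟩` gives
`⟨x(s)|₂ φ = d^{−1} ∑_k e_k ⊗ e_{s−k}`, a nonzero vector whose normalization is
maximally entangled: both reduced density matrices equal `I/d`. -/
theorem three_qudit_maximal_connectedness (d : ℕ) [NeZero d] (hd : 2 ≤ d)
    (s : ZMod d) :
    projectedMiddle d s
      = (fun p : ZMod d × ZMod d => if p.2 = s - p.1 then ((d : ℂ))⁻¹ else 0) ∧
    projectedMiddle d s ≠ 0 ∧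
    (letI u : (ZMod d × ZMod d) → ℂ :=
      (Real.sqrt (∑ p : ZMod d × ZMod d, Complex.normSq (projectedMiddle d s p)) : ℂ)⁻¹
        • projectedMiddle d s
     (Matrix.of fun a b : ZMod d => ∑ c : ZMod d, u (a, c) * star (u (b, c)))
        = ((d : ℂ))⁻¹ • (1 : Matrix (ZMod d) (ZMod d) ℂ) ∧
     (Matrix.of fun a b : ZMod d => ∑ c : ZMod d, u (c, a) * star (u (c, b)))
        = ((d : ℂ))⁻¹ • (1 : Matrix (ZMod d) (ZMod d) ℂ)) :=
  three_qudit_maximal_connectedness_general d s
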